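/- Let {X_n} satisfy AIM(x_n) with separation sequence q_n and mixing coefficients α_n, suppose n·F̄(x_n) → τ > 0 as n → ∞, and let (p_n) be a sequence of positive integers with p_n = o(n), n·α_n = o(p_n) and q_n = o(p_n). Then P(M_n ≤ x_n) − ∏_{i=1}^{r_n} P(M(A_i) ≤ x_n) → 0 as n → ∞, where r_n = ⌊n/(p_n+q_n)⌋ and A_i = {(i−1)(p_n+q_n)+1, …, i·p_n + (i−1)·q_n} for 1 ≤ i ≤ r_n. -/

import Mathlib

open MeasureTheory Filter Finset Asymptotics

/-- Probability of an event as a real number. -/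
noncomputable def pr {Ω : Type*} [MeasurableSpace Ω] (P : Measure Ω) (A : Set Ω) : ℝ :=
  (P A).toReal

/-- The event that `X i ≤ x` for every index `i` in the set `S`;
this is the event `{M(S) ≤ x}` where `M(S) = max {X i : i ∈ S}`. -/
def allLe {Ω : Type*} (X : ℕ → Ω → ℝ) (S : Set ℕ) (x : ℝ) : Set Ω :=
  {ω | ∀ i ∈ S, X i ω ≤ x}

/-- `α` is a sequence of AIM mixing coefficients for `X` relative to thresholds `xs`
with separation sequence `q`: for any two intervals `I₁ = [a,b]`, `I₂ = [b+qₙ+1, c]`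
contained in `{1,…,n}`, separated by `qₙ`, each of cardinality at least `qₙ`,
the maximum-based discrepancy is bounded by `α n`. -/
def AIMBound {Ω : Type*} [MeasurableSpace Ω] (P : Measure Ω) (X : ℕ → Ω → ℝ)
    (xs : ℕ → ℝ) (q : ℕ → ℕ) (α : ℕ → ℝ) : Prop :=
  ∀ n a b c : ℕ, 1 ≤ a → a ≤ b → b + q n + 1 ≤ c → c ≤ n →
    q n ≤ b + 1 - a → q n ≤ c - (b + q n) →
    |pr P (allLe X (Set.Icc a b ∪ Set.Icc (b + q n + 1) c) (xs n)) -
      pr P (allLe X (Set.Icc a b) (xs n)) *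
        pr P (allLe X (Set.Icc (b + q n + 1) c) (xs n))| ≤ α n

/-!
Cut `{1, …, n}` into `rₙ` consecutive windows of length `pₙ + qₙ`, each a big block `Aᵢ`
followed by a gap of length `qₙ`. Write `Bⱼ` for the probability that the first `j` windows,
without the last gap, stay below `xₙ`. Adding one window costs at most `αₙ` by AIM, applied
across the gap, plus `qₙ F̄(xₙ)` for filling the gap in by the union bound; hence
`|Bⱼ₊₁ - Bⱼ P(M(Aⱼ₊₁) ≤ xₙ)| ≤ αₙ + qₙ F̄(xₙ)` and, telescoping,
`|B_{rₙ} - ∏ᵢ P(M(Aᵢ) ≤ xₙ)| ≤ rₙ (αₙ + qₙ F̄(xₙ))`. The indices not covered by `B_{rₙ}`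
number at most `pₙ + 2qₙ`. Since `rₙ ≤ n / pₙ` and `n F̄(xₙ) → τ`, the total error
`(pₙ + 2qₙ) F̄(xₙ) + rₙ (αₙ + qₙ F̄(xₙ))` is `o(1)` under `pₙ = o(n)`, `n αₙ = o(pₙ)`
and `qₙ = o(pₙ)`.
-/

theorem abs_sub_prod_range_le {B a : ℕ → ℝ} {ε : ℝ} {m : ℕ} (h0 : B 0 = 1)
    (ha : ∀ k < m, |a k| ≤ 1) (hstep : ∀ k < m, |B (k + 1) - B k * a k| ≤ ε) :
    |B m - ∏ k ∈ range m, a k| ≤ m * ε := by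
  induction m with
  | zero => simp [h0]
  | succ m ih =>
    have ih := ih (fun k hk => ha k (by omega)) (fun k hk => hstep k (by omega))
    rw [prod_range_succ]
    calc |B (m + 1) - (∏ k ∈ range m, a k) * a m|
        ≤ |B (m + 1) - B m * a m| + |B m - ∏ k ∈ range m, a k| * |a m| := by
          rw [← abs_mul, sub_mul]; exact abs_sub_le _ _ _
      _ ≤ ε + m * ε :=
          add_le_add (hstep m (by omega))
            ((mul_le_of_le_one_right (abs_nonneg _) (ha m (by omega))).trans ih)
      _ = (m + 1 : ℕ) * ε := by push_cast; ring

section Events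

variable {Ω : Type*} {X : ℕ → Ω → ℝ}

theorem allLe_empty (x : ℝ) : allLe X ∅ x = Set.univ := by
  simp [allLe]

theorem allLe_anti {S T : Set ℕ} (h : S ⊆ T) (x : ℝ) : allLe X T x ⊆ allLe X S x :=
  fun _ hω i hi => hω i (h hi)

theorem allLe_subset_union_biUnion {S T : Set ℕ} {D : Finset ℕ} (hD : T \ S ⊆ D) (x : ℝ) :
    allLe X S x ⊆ allLe X T x ∪ ⋃ i ∈ D, {ω | x < X i ω} := by
  intro ω hω
  by_cases hT : ω ∈ allLe X T x
  · exact Or.inl hT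
  · obtain ⟨i, hiT, hix⟩ : ∃ i ∈ T, ¬X i ω ≤ x := by simpa [allLe] using hT
    exact Or.inr (Set.mem_biUnion (hD ⟨hiT, fun hiS => hix (hω i hiS)⟩) (not_le.1 hix))

variable [MeasurableSpace Ω] {P : Measure Ω}

theorem pr_eq_measureReal (A : Set Ω) : pr P A = P.real A := rfl

theorem pr_allLe_le_add_sum [IsFiniteMeasure P] {S T : Set ℕ} {D : Finset ℕ}
    (hD : T \ S ⊆ D) (x : ℝ) :
    pr P (allLe X S x) ≤ pr P (allLe X T x) + ∑ i ∈ D, pr P {ω | x < X i ω} := by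
  simp only [pr_eq_measureReal]
  calc P.real (allLe X S x)
      ≤ P.real (allLe X T x ∪ ⋃ i ∈ D, {ω | x < X i ω}) :=
        measureReal_mono (allLe_subset_union_biUnion hD x)
    _ ≤ P.real (allLe X T x) + ∑ i ∈ D, P.real {ω | x < X i ω} := by
        grw [measureReal_union_le, measureReal_biUnion_finset_le]

variable [IsProbabilityMeasure P]

theorem pr_lt_eq_one_sub {i : ℕ} (hX : Measurable (X i)) (x : ℝ) :
    pr P {ω | x < X i ω} = 1 - pr P {ω | X i ω ≤ x} := by
  have hcompl : {ω | x < X i ω} = {ω | X i ω ≤ x}ᶜ := by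
    ext ω; simp
  rw [hcompl, pr_eq_measureReal, probReal_compl_eq_one_sub (measurableSet_le hX measurable_const)]
  rfl

theorem abs_pr_allLe_sub_le {F : ℝ → ℝ} {S T : Set ℕ} {D : Finset ℕ} {x : ℝ}
    (hmeas : ∀ i ∈ D, Measurable (X i)) (hF : ∀ i ∈ D, pr P {ω | X i ω ≤ x} = F x)
    (hST : S ⊆ T) (hD : T \ S ⊆ D) :
    |pr P (allLe X T x) - pr P (allLe X S x)| ≤ #D * (1 - F x) := by
  have hsum : ∑ i ∈ D, pr P {ω | x < X i ω} = #D * (1 - F x) := by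
    rw [sum_congr rfl fun i hi => by rw [pr_lt_eq_one_sub (hmeas i hi), hF i hi],
      sum_const, nsmul_eq_mul]
  have hle : pr P (allLe X T x) ≤ pr P (allLe X S x) :=
    measureReal_mono (allLe_anti hST x)
  rw [abs_sub_comm, abs_of_nonneg (sub_nonneg.2 hle), ← hsum]
  linarith [pr_allLe_le_add_sum (P := P) (X := X) hD x]

end Events

section Blocks

variable {Ω : Type*} [MeasurableSpace Ω] {P : Measure Ω} [IsProbabilityMeasure P]
  {X : ℕ → Ω → ℝ} {F : ℝ → ℝ} {xs : ℕ → ℝ} {q : ℕ → ℕ} {α : ℕ → ℝ} {p : ℕ → ℕ}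

theorem one_sub_nonneg_of_pr_eq (hF : ∀ i, 1 ≤ i → ∀ t : ℝ, pr P {ω | X i ω ≤ t} = F t)
    (t : ℝ) : 0 ≤ 1 - F t := by
  rw [← hF 1 le_rfl t, sub_nonneg]
  exact measureReal_le_one

theorem abs_pr_Icc_sub_mul_le (hmeas : ∀ i, Measurable (X i))
    (hF : ∀ i, 1 ≤ i → ∀ t : ℝ, pr P {ω | X i ω ≤ t} = F t) (hbd : AIMBound P X xs q α)
    {n b l : ℕ} (hb : 1 ≤ b) (hqb : q n ≤ b) (hl : 1 ≤ l) (hql : q n ≤ l)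
    (hn : b + q n + l ≤ n) :
    |pr P (allLe X (Set.Icc 1 (b + q n + l)) (xs n)) -
      pr P (allLe X (Set.Icc 1 b) (xs n)) *
        pr P (allLe X (Set.Icc (b + q n + 1) (b + q n + l)) (xs n))|
    ≤ α n + q n * (1 - F (xs n)) := by
  set U := Set.Icc 1 b ∪ Set.Icc (b + q n + 1) (b + q n + l)
  have haim := hbd n 1 b (b + q n + l) le_rfl hb (by omega) hn (by omega) (by omega)
  have hgap : |pr P (allLe X (Set.Icc 1 (b + q n + l)) (xs n)) - pr P (allLe X U (xs n))|
      ≤ q n * (1 - F (xs n)) := by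
    have h := abs_pr_allLe_sub_le (P := P) (x := xs n) (D := Finset.Icc (b + 1) (b + q n))
      (fun i _ => hmeas i) (fun i hi => hF i (by rw [Finset.mem_Icc] at hi; omega) _)
      (T := Set.Icc 1 (b + q n + l)) (S := U)
      (by intro i; simp only [U, Set.mem_union, Set.mem_Icc]; omega)
      (by intro i; simp only [U, Set.mem_sdiff, Set.mem_union, Set.mem_Icc, coe_Icc]; omega)
    rwa [Nat.card_Icc, show b + q n + 1 - (b + 1) = q n by omega] at h
  calc _ ≤ |pr P (allLe X (Set.Icc 1 (b + q n + l)) (xs n)) - pr P (allLe X U (xs n))| +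
        |pr P (allLe X U (xs n)) - pr P (allLe X (Set.Icc 1 b) (xs n)) *
          pr P (allLe X (Set.Icc (b + q n + 1) (b + q n + l)) (xs n))| := abs_sub_le _ _ _
    _ ≤ q n * (1 - F (xs n)) + α n := add_le_add hgap haim
    _ = α n + q n * (1 - F (xs n)) := add_comm _ _

/-- With `s = p n + q n`, `[1, ks - q n]` is the union of the first `k` windows of length `s`
without the last gap; for `k = 0` it is empty by truncated subtraction. -/
theorem abs_pr_window_step_le (hmeas : ∀ i, Measurable (X i))
    (hF : ∀ i, 1 ≤ i → ∀ t : ℝ, pr P {ω | X i ω ≤ t} = F t) (hbd : AIMBound P X xs q α)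
    {n k : ℕ} (hp : 1 ≤ p n) (hqp : q n ≤ p n) (hk : (k + 1) * (p n + q n) ≤ n) :
    |pr P (allLe X (Set.Icc 1 ((k + 1) * (p n + q n) - q n)) (xs n)) -
      pr P (allLe X (Set.Icc 1 (k * (p n + q n) - q n)) (xs n)) *
        pr P (allLe X (Set.Icc (k * (p n + q n) + 1) (k * (p n + q n) + p n)) (xs n))|
    ≤ |α n| + q n * (1 - F (xs n)) := by
  have hF₀ := one_sub_nonneg_of_pr_eq hF (xs n)
  cases k with
  | zero =>
    simp only [zero_add, one_mul, zero_mul, Nat.zero_sub, Set.Icc_eq_empty_of_lt zero_lt_one,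
      allLe_empty, pr_eq_measureReal, probReal_univ, Nat.add_sub_cancel, sub_self, abs_zero]
    positivity
  | succ k =>
    have hs : p n + q n ≤ (k + 1) * (p n + q n) := Nat.le_mul_of_pos_left _ k.succ_pos
    set b := (k + 1) * (p n + q n) - q n
    have hb : (k + 1) * (p n + q n) = b + q n := by omega
    have hpb : p n ≤ b := by omega
    have hb' : (k + 1 + 1) * (p n + q n) = b + q n + p n + q n := by rw [add_mul, hb]; ring
    rw [hb'] at hk
    rw [hb', hb, Nat.add_sub_cancel]
    calc _ ≤ α n + q n * (1 - F (xs n)) :=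
          abs_pr_Icc_sub_mul_le hmeas hF hbd (hp.trans hpb) (hqp.trans hpb) hp hqp (by omega)
      _ ≤ |α n| + q n * (1 - F (xs n)) := by grw [← le_abs_self]

theorem abs_pr_sub_prod_blocks_le (hmeas : ∀ i, Measurable (X i))
    (hF : ∀ i, 1 ≤ i → ∀ t : ℝ, pr P {ω | X i ω ≤ t} = F t) (hbd : AIMBound P X xs q α)
    {n : ℕ} (hp : 1 ≤ p n) (hqp : q n ≤ p n) :
    |pr P (allLe X (Set.Icc 1 n) (xs n)) -
      ∏ i ∈ Finset.Icc 1 (n / (p n + q n)),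
        pr P (allLe X (Set.Icc ((i - 1) * (p n + q n) + 1) (i * p n + (i - 1) * q n)) (xs n))|
    ≤ (p n + 2 * q n) * (1 - F (xs n)) +
      (n / (p n + q n) : ℕ) * (|α n| + q n * (1 - F (xs n))) := by
  set s := p n + q n
  set r := n / s
  set B : ℕ → ℝ := fun j => pr P (allLe X (Set.Icc 1 (j * s - q n)) (xs n))
  have hprod : ∏ i ∈ Finset.Icc 1 r,
      pr P (allLe X (Set.Icc ((i - 1) * s + 1) (i * p n + (i - 1) * q n)) (xs n)) =
      ∏ k ∈ range r, pr P (allLe X (Set.Icc (k * s + 1) (k * s + p n)) (xs n)) := by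
    rw [← Ico_add_one_right_eq_Icc, prod_Ico_eq_prod_range, Nat.add_sub_cancel]
    refine prod_congr rfl fun k _ => ?_
    rw [add_comm 1 k, Nat.add_sub_cancel, add_comm (k * s),
      show (k + 1) * p n + k * q n = k * s + p n by simp only [s]; ring]
  have hblocks : |B r - ∏ k ∈ range r, pr P (allLe X (Set.Icc (k * s + 1) (k * s + p n)) (xs n))|
      ≤ r * (|α n| + q n * (1 - F (xs n))) := by
    refine abs_sub_prod_range_le ?_ (fun k _ => ?_) (fun k hk => ?_)
    · simp [B, allLe_empty, pr_eq_measureReal]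
    · rw [pr_eq_measureReal, abs_of_nonneg measureReal_nonneg]
      exact measureReal_le_one
    · exact abs_pr_window_step_le hmeas hF hbd hp hqp ((Nat.le_div_iff_mul_le (by omega)).1 hk)
  have htail : |pr P (allLe X (Set.Icc 1 n) (xs n)) - B r| ≤ (p n + 2 * q n) * (1 - F (xs n)) := by
    have hs : s = p n + q n := rfl
    have hrs : r * s ≤ n := Nat.div_mul_le_self n s
    have hnrs : n < r * s + s := Nat.lt_div_mul_add (by omega)
    calc _ ≤ #(Finset.Icc (r * s - q n + 1) n) * (1 - F (xs n)) :=
          abs_pr_allLe_sub_le (fun i _ => hmeas i)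
            (fun i hi => hF i (by rw [Finset.mem_Icc] at hi; omega) _)
            (by intro i; simp only [Set.mem_Icc]; omega)
            (by intro i; simp only [Set.mem_sdiff, Set.mem_Icc, coe_Icc]; omega)
      _ ≤ (p n + 2 * q n) * (1 - F (xs n)) := by
          gcongr
          · exact one_sub_nonneg_of_pr_eq hF _
          · exact_mod_cast (show #(Finset.Icc (r * s - q n + 1) n) ≤ p n + 2 * q n by
              rw [Nat.card_Icc]; omega)
  rw [hprod]
  calc _ ≤ |pr P (allLe X (Set.Icc 1 n) (xs n)) - B r| +
        |B r - ∏ k ∈ range r, pr P (allLe X (Set.Icc (k * s + 1) (k * s + p n)) (xs n))| :=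
        abs_sub_le _ _ _
    _ ≤ _ := add_le_add htail hblocks

end Blocks

theorem tendsto_block_error_bound {F : ℝ → ℝ} {xs : ℕ → ℝ} {q p : ℕ → ℕ} {α : ℕ → ℝ} {τ : ℝ}
    (hF₀ : ∀ n, 0 ≤ 1 - F (xs n)) (hppos : ∀ n, 1 ≤ p n)
    (hFbar : Tendsto (fun n : ℕ => (n : ℝ) * (1 - F (xs n))) atTop (nhds τ))
    (hp : (fun n : ℕ => (p n : ℝ)) =o[atTop] (fun n : ℕ => (n : ℝ)))
    (hnα : (fun n : ℕ => (n : ℝ) * α n) =o[atTop] (fun n : ℕ => (p n : ℝ)))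
    (hqp : (fun n : ℕ => (q n : ℝ)) =o[atTop] (fun n : ℕ => (p n : ℝ))) :
    Tendsto (fun n => (p n + 2 * q n) * (1 - F (xs n)) +
      (n / (p n + q n) : ℕ) * (|α n| + q n * (1 - F (xs n)))) atTop (nhds 0) := by
  have hgap : Tendsto (fun n : ℕ => ((p n : ℝ) + 2 * q n) / n) atTop (nhds 0) :=
    (hp.add ((hqp.trans_isBigO hp.isBigO).const_mul_left 2)).tendsto_div_nhds_zero
  have hα : Tendsto (fun n : ℕ => ‖(n : ℝ) * α n‖ / p n) atTop (nhds 0) :=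
    hnα.norm_left.tendsto_div_nhds_zero
  have hlim := ((hgap.mul hFbar).add hα).add (hqp.tendsto_div_nhds_zero.mul hFbar)
  simp only [zero_mul, add_zero] at hlim
  refine squeeze_zero' (.of_forall fun n => by have := hF₀ n; positivity) ?_ hlim
  filter_upwards [eventually_gt_atTop 0] with n hn₀
  have hn : (0 : ℝ) < n := Nat.cast_pos.2 hn₀
  have hp₀ : (0 : ℝ) < p n := Nat.cast_pos.2 (hppos n)
  have hr : ((n / (p n + q n) : ℕ) : ℝ) ≤ n / p n := by
    rw [le_div_iff₀ hp₀]
    exact_mod_cast (Nat.mul_le_mul_left _ (Nat.le_add_right _ _)).trans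
      (Nat.div_mul_le_self n (p n + q n))
  calc _ ≤ (p n + 2 * q n) * (1 - F (xs n)) + n / p n * (|α n| + q n * (1 - F (xs n))) := by
        have := hF₀ n
        gcongr
    _ = _ := by
        rw [Real.norm_eq_abs, abs_mul, Nat.abs_cast]
        field_simp
        ring

theorem stmt1_general {Ω : Type*} [MeasurableSpace Ω] (P : Measure Ω) [IsProbabilityMeasure P]
    (X : ℕ → Ω → ℝ) (F : ℝ → ℝ) (xs : ℕ → ℝ) (q : ℕ → ℕ) (α : ℕ → ℝ) (p : ℕ → ℕ)
    (τ : ℝ)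
    (hmeas : ∀ i, Measurable (X i))
    (hF : ∀ i, 1 ≤ i → ∀ t : ℝ, pr P {ω | X i ω ≤ t} = F t)
    (hbd : AIMBound P X xs q α)
    (hFbar : Tendsto (fun n : ℕ => (n : ℝ) * (1 - F (xs n))) atTop (nhds τ))
    (hppos : ∀ m, 1 ≤ p m)
    (hp : (fun n : ℕ => (p n : ℝ)) =o[atTop] (fun n : ℕ => (n : ℝ)))
    (hnα : (fun n : ℕ => (n : ℝ) * α n) =o[atTop] (fun n : ℕ => (p n : ℝ)))
    (hqp : (fun n : ℕ => (q n : ℝ)) =o[atTop] (fun n : ℕ => (p n : ℝ))) :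
    Tendsto (fun n =>
      pr P (allLe X (Set.Icc 1 n) (xs n)) -
        ∏ i ∈ Finset.Icc 1 (n / (p n + q n)),
          pr P (allLe X
            (Set.Icc ((i - 1) * (p n + q n) + 1) (i * p n + (i - 1) * q n)) (xs n)))
      atTop (nhds 0) := by
  have hF₀ : ∀ n, 0 ≤ 1 - F (xs n) := fun n => one_sub_nonneg_of_pr_eq hF (xs n)
  have hqp_le : ∀ᶠ n in atTop, q n ≤ p n := by
    filter_upwards [hqp.eventuallyLE] with n h
    exact_mod_cast (by simpa using h : (q n : ℝ) ≤ p n)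
  rw [tendsto_zero_iff_abs_tendsto_zero]
  refine squeeze_zero' (.of_forall fun n => abs_nonneg _) ?_
    (tendsto_block_error_bound hF₀ hppos hFbar hp hnα hqp)
  filter_upwards [hqp_le] with n hqn
  exact abs_pr_sub_prod_blocks_le hmeas hF hbd (hppos n) hqn

/-- Lemma lemOB: under AIM(xₙ) with `n·F̄(xₙ) → τ > 0` and a block-length
sequence `pₙ` with `pₙ = o(n)`, `n·αₙ = o(pₙ)`, `qₙ = o(pₙ)`, the probability
`P(Mₙ ≤ xₙ)` is asymptotically the product of the probabilities of the big-block
maxima `M(Aᵢ)`, `Aᵢ = {(i−1)(pₙ+qₙ)+1, …, i·pₙ+(i−1)·qₙ}`, `1 ≤ i ≤ rₙ = ⌊n/(pₙ+qₙ)⌋`. -/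
theorem stmt1 {Ω : Type*} [MeasurableSpace Ω] (P : Measure Ω) [IsProbabilityMeasure P]
    (X : ℕ → Ω → ℝ) (F : ℝ → ℝ) (xs : ℕ → ℝ) (q : ℕ → ℕ) (α : ℕ → ℝ) (p : ℕ → ℕ)
    (τ : ℝ) (hτ : 0 < τ)
    (hmeas : ∀ i, Measurable (X i))
    (hF : ∀ i, 1 ≤ i → ∀ t : ℝ, pr P {ω | X i ω ≤ t} = F t)
    (hqpos : ∀ m, 1 ≤ q m)
    (hq : (fun n : ℕ => (q n : ℝ)) =o[atTop] (fun n : ℕ => (n : ℝ)))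
    (hα : Tendsto α atTop (nhds 0))
    (hbd : AIMBound P X xs q α)
    (hFbar : Tendsto (fun n : ℕ => (n : ℝ) * (1 - F (xs n))) atTop (nhds τ))
    (hppos : ∀ m, 1 ≤ p m)
    (hp : (fun n : ℕ => (p n : ℝ)) =o[atTop] (fun n : ℕ => (n : ℝ)))
    (hnα : (fun n : ℕ => (n : ℝ) * α n) =o[atTop] (fun n : ℕ => (p n : ℝ)))
    (hqp : (fun n : ℕ => (q n : ℝ)) =o[atTop] (fun n : ℕ => (p n : ℝ))) :
    Tendsto (fun n =>
      pr P (allLe X (Set.Icc 1 n) (xs n)) -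
        ∏ i ∈ Finset.Icc 1 (n / (p n + q n)),
          pr P (allLe X
            (Set.Icc ((i - 1) * (p n + q n) + 1) (i * p n + (i - 1) * q n)) (xs n)))
      atTop (nhds 0) :=
  stmt1_general P X F xs q α p τ hmeas hF hbd hFbar hppos hp hnα hqp
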